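/- arXiv:1606.02827 — 4 statements merged into one kernel-verified Lean document; each statement's English description precedes it below -/
import Mathlib

section
/- For any joint distribution p(x,y) over finite sets X and Y, and any conditional distribution q(x|y) with q(x|y) > 0 whenever p(x,y) > 0, the mutual information satisfies I(x:y) ≥ H(x) + E_{p(x,y)}[ln q(x|y)]. -/
open Finset

lemma gibbs {ι : Type*} [Fintype ι] (f g : ι → ℝ)
    (hf : ∀ i, 0 ≤ f i) (hg : ∀ i, 0 ≤ g i)
    (hfg : ∀ i, 0 < f i → 0 < g i)
    (hgs : ∑ i, g i ≤ 1) (hfs : ∑ i, f i = 1) :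
    0 ≤ ∑ i, f i * Real.log (f i / g i) := by
  have key : ∑ i, f i * Real.log (g i / f i) ≤ 0 := by
    have h1 : ∑ i, f i * Real.log (g i / f i) ≤ ∑ i, (g i - f i) := by
      apply Finset.sum_le_sum
      intro i _
      rcases eq_or_lt_of_le (hf i) with h | h
      · simp [← h, hg i]
      · have hgi := hfg i h
        have hlog : Real.log (g i / f i) ≤ g i / f i - 1 :=
          Real.log_le_sub_one_of_pos (by positivity)
        calc f i * Real.log (g i / f i) ≤ f i * (g i / f i - 1) := by
              exact mul_le_mul_of_nonneg_left hlog (le_of_lt h)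
          _ = g i - f i := by field_simp
    have h2 : ∑ i, (g i - f i) ≤ 0 := by
      rw [Finset.sum_sub_distrib, hfs]; linarith
    linarith
  have heq : ∀ i, f i * Real.log (f i / g i) = -(f i * Real.log (g i / f i)) := by
    intro i
    rw [← inv_div (g i) (f i), Real.log_inv]; ring
  rw [Finset.sum_congr rfl (fun i _ => heq i), Finset.sum_neg_distrib]
  linarith

/-- Mutual information of a finite joint pmf `p` on `X × Y` (natural log). -/
noncomputable def MI {X Y : Type*} [Fintype X] [Fintype Y] (p : X → Y → ℝ) : ℝ :=
  ∑ x, ∑ y, p x y * Real.log (p x y / ((∑ y', p x y') * (∑ x', p x' y)))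

/-- Entropy of the `X`-marginal of `p`. -/
noncomputable def Hx {X Y : Type*} [Fintype X] [Fintype Y] (p : X → Y → ℝ) : ℝ :=
  -∑ x, (∑ y, p x y) * Real.log (∑ y, p x y)

/-- Barber–Agakov variational lower bound:
`I(x:y) ≥ H(x) + E_{p(x,y)}[ln q(x|y)]`. -/
theorem stmt0 {X Y : Type*} [Fintype X] [Fintype Y]
    (p q : X → Y → ℝ)
    (hp0 : ∀ x y, 0 ≤ p x y) (hp1 : ∑ x, ∑ y, p x y = 1)
    (hq0 : ∀ x y, 0 ≤ q x y) (hq1 : ∀ y, ∑ x, q x y = 1)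
    (hqp : ∀ x y, 0 < p x y → 0 < q x y) :
    Hx p + ∑ x, ∑ y, p x y * Real.log (q x y) ≤ MI p := by
  -- marginal positivity facts
  have hpx : ∀ x y, 0 < p x y → 0 < ∑ y', p x y' := fun x y h =>
    lt_of_lt_of_le h (Finset.single_le_sum (fun y' _ => hp0 x y') (mem_univ y))
  have hpy : ∀ x y, 0 < p x y → 0 < ∑ x', p x' y := fun x y h =>
    lt_of_lt_of_le h (Finset.single_le_sum (fun x' _ => hp0 x' y) (mem_univ x))
  -- KL nonnegativity on X × Y
  have hKL : 0 ≤ ∑ z : X × Y, p z.1 z.2 *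
      Real.log (p z.1 z.2 / ((∑ x', p x' z.2) * q z.1 z.2)) := by
    apply gibbs (f := fun z : X × Y => p z.1 z.2)
      (g := fun z : X × Y => (∑ x', p x' z.2) * q z.1 z.2)
    · exact fun z => hp0 z.1 z.2
    · intro z
      exact mul_nonneg (Finset.sum_nonneg fun x' _ => hp0 x' z.2) (hq0 z.1 z.2)
    · intro z h
      exact mul_pos (hpy z.1 z.2 h) (hqp z.1 z.2 h)
    · rw [Fintype.sum_prod_type_right]
      have : ∀ y : Y, ∑ x, (∑ x', p x' y) * q x y = ∑ x', p x' y := by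
        intro y
        rw [← Finset.mul_sum, hq1 y, mul_one]
      rw [Finset.sum_congr rfl (fun y _ => this y), Finset.sum_comm, hp1]
    · rw [Fintype.sum_prod_type, hp1]
  rw [Fintype.sum_prod_type] at hKL
  -- rewrite the difference as the KL divergence
  have hdiff : MI p - (Hx p + ∑ x, ∑ y, p x y * Real.log (q x y)) =
      ∑ x, ∑ y, p x y * Real.log (p x y / ((∑ x', p x' y) * q x y)) := by
    unfold MI Hx
    have hmarg : ∀ x : X, (∑ y, p x y) * Real.log (∑ y, p x y) =
        ∑ y, p x y * Real.log (∑ y', p x y') := by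
      intro x; rw [Finset.sum_mul]
    rw [Finset.sum_congr rfl (fun x _ => hmarg x)]
    rw [sub_add_eq_sub_sub, sub_neg_eq_add]
    rw [← Finset.sum_add_distrib, ← Finset.sum_sub_distrib]
    apply Finset.sum_congr rfl
    intro x _
    rw [← Finset.sum_add_distrib, ← Finset.sum_sub_distrib]
    apply Finset.sum_congr rfl
    intro y _
    rcases eq_or_lt_of_le (hp0 x y) with h | h
    · simp [← h]
    · have h1 := hpx x y h
      have h2 := hpy x y h
      have h3 := hqp x y h
      rw [Real.log_div (ne_of_gt h) (by positivity),
          Real.log_div (ne_of_gt h) (by positivity),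
          Real.log_mul (ne_of_gt h1) (ne_of_gt h2),
          Real.log_mul (ne_of_gt h2) (ne_of_gt h3)]
      ring
  linarith
end

section
/- If the joint distribution factorizes as a Naive Bayes model, p(x,y) = p(y) Π_i p(x_i|y), then for the variational distribution q(y|x_S) = p(y) Π_{j∈S} p(x_j|y) / Σ_{y'} p(y') Π_{j∈S} p(x_j|y'), the variational lower bound E_{p(x_S,y)}[ln(q(x_S|y)/q(x_S))] with q(x_S|y) = Π_{j∈S} p(x_j|y) equals the mutual information I(x_S : y) exactly, for any subset S of features. -/
open Finset

/-- Joint pmf of `(x_S, y)` obtained from the joint `p(x, y)` by marginalizing out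
the coordinates outside `S`. -/
noncomputable def projS {Y V : Type*} [Fintype Y] [Fintype V] [DecidableEq V] {D : ℕ}
    (p : (Fin D → V) → Y → ℝ) (S : Finset (Fin D)) :
    ({j : Fin D // j ∈ S} → V) → Y → ℝ :=
  fun xs y => ∑ x : Fin D → V,
    if ∀ j : {j : Fin D // j ∈ S}, x j.val = xs j then p x y else 0

lemma projS_eq {Y V : Type*} [Fintype Y] [Fintype V] [DecidableEq V] {D : ℕ}
    (pY : Y → ℝ) (c : Fin D → V → Y → ℝ) (hc1 : ∀ i y, ∑ v, c i v y = 1)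
    (S : Finset (Fin D)) (xs : {j : Fin D // j ∈ S} → V) (y : Y) :
    projS (fun x y => pY y * ∏ i, c i (x i) y) S xs y
      = pY y * ∏ j : {j : Fin D // j ∈ S}, c j.val (xs j) y := by
  classical
  unfold projS
  set t : Fin D → Finset V := fun i => if h : i ∈ S then {xs ⟨i, h⟩} else Finset.univ with ht
  have hfilter : (Finset.univ.filter
        (fun x : Fin D → V => ∀ j : {j : Fin D // j ∈ S}, x j.val = xs j))
      = Fintype.piFinset t := by
    ext x
    simp only [Finset.mem_filter, Finset.mem_univ, true_and, Fintype.mem_piFinset, ht]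
    constructor
    · intro h i
      by_cases hi : i ∈ S
      · simp [hi, h ⟨i, hi⟩]
      · simp [hi]
    · intro h j
      have := h j.val
      rw [dif_pos j.prop] at this
      simpa using this
  rw [← Finset.sum_filter, hfilter, ← Finset.mul_sum,
    ← Finset.prod_univ_sum t (fun i v => c i v y)]
  congr 1
  have hcompl : ∀ i ∈ Sᶜ, (∑ v ∈ t i, c i v y) = 1 := by
    intro i hi
    rw [Finset.mem_compl] at hi
    simp [ht, hi, hc1 i y]
  rw [← Finset.prod_mul_prod_compl S (fun i => ∑ v ∈ t i, c i v y),
    Finset.prod_congr rfl hcompl, Finset.prod_const_one, mul_one,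
    Finset.univ_eq_attach, ← Finset.prod_attach S (fun i => ∑ v ∈ t i, c i v y)]
  apply Finset.prod_congr rfl
  intro j _
  simp [ht, j.prop]

lemma sumQ_eq_one {Y V : Type*} [Fintype Y] [Fintype V] [DecidableEq V] {D : ℕ}
    (c : Fin D → V → Y → ℝ) (hc1 : ∀ i y, ∑ v, c i v y = 1)
    (S : Finset (Fin D)) (y : Y) :
    ∑ xs : {j : Fin D // j ∈ S} → V,
      (∏ j : {j : Fin D // j ∈ S}, c j.val (xs j) y) = 1 := by
  classical
  rw [← Fintype.piFinset_univ,
    ← Finset.prod_univ_sum (fun _ : {j : Fin D // j ∈ S} => (Finset.univ : Finset V))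
      (fun j v => c j.val v y)]
  simp [hc1]

/-- Exactness of the variational bound under a Naive Bayes model: if
`p(x,y) = p(y) ∏ i, p(x_i|y)`, then for `q(x_S|y) = ∏_{j∈S} p(x_j|y)` and
`q(x_S) = ∑_{y'} q(x_S|y')p(y')`, the lower bound
`E_{p(x_S,y)}[ln(q(x_S|y)/q(x_S))]` equals `I(x_S : y)`, for any subset `S`. -/
theorem stmt4 {Y V : Type*} [Fintype Y] [Fintype V] [DecidableEq V] {D : ℕ}
    (pY : Y → ℝ) (c : Fin D → V → Y → ℝ)
    (hpY0 : ∀ y, 0 ≤ pY y) (hpY1 : ∑ y, pY y = 1)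
    (hc0 : ∀ i v y, 0 ≤ c i v y) (hc1 : ∀ i y, ∑ v, c i v y = 1)
    (S : Finset (Fin D)) :
    (∑ xs : {j : Fin D // j ∈ S} → V, ∑ y,
        projS (fun x y => pY y * ∏ i, c i (x i) y) S xs y *
          Real.log ((∏ j : {j : Fin D // j ∈ S}, c j.val (xs j) y) /
            (∑ y', (∏ j : {j : Fin D // j ∈ S}, c j.val (xs j) y') * pY y')))
      = MI (projS (fun x y => pY y * ∏ i, c i (x i) y) S) := by
  classical
  unfold MI
  apply Finset.sum_congr rfl
  intro xs _
  apply Finset.sum_congr rfl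
  intro y _
  set Q : Y → ℝ := fun y => ∏ j : {j : Fin D // j ∈ S}, c j.val (xs j) y with hQ
  have hproj : ∀ y', projS (fun x y => pY y * ∏ i, c i (x i) y) S xs y' = pY y' * Q y' :=
    fun y' => projS_eq pY c hc1 S xs y'
  have hrow : (∑ y', projS (fun x y => pY y * ∏ i, c i (x i) y) S xs y')
      = ∑ y', Q y' * pY y' := by
    apply Finset.sum_congr rfl
    intro y' _
    rw [hproj y', mul_comm]
  have hcol : (∑ xs' : {j : Fin D // j ∈ S} → V,
      projS (fun x y => pY y * ∏ i, c i (x i) y) S xs' y) = pY y := by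
    have : ∀ xs' : {j : Fin D // j ∈ S} → V,
        projS (fun x y => pY y * ∏ i, c i (x i) y) S xs' y
          = pY y * ∏ j : {j : Fin D // j ∈ S}, c j.val (xs' j) y :=
      fun xs' => projS_eq pY c hc1 S xs' y
    rw [Finset.sum_congr rfl (fun xs' _ => this xs'), ← Finset.mul_sum,
      sumQ_eq_one c hc1 S y, mul_one]
  rw [hproj y, hrow, hcol]
  by_cases h : pY y * Q y = 0
  · rw [h]; ring
  · have hpy : pY y ≠ 0 := fun h0 => h (by rw [h0, zero_mul])
    congr 1
    rw [mul_comm (∑ y', Q y' * pY y') (pY y), mul_div_mul_left _ _ hpy]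
end

section
/- For any subset S of features and any feature i that is conditionally independent of y given nothing and independent of x_S (i.e., p(x_i|y) = p(x_i) for all y), the Naive Bayes variational lower bound is unchanged by adding i: I_LB(x_{S∪{i}} : y) = I_LB(x_S : y), where I_LB(x_S:y) = E_{p(x_S,y)}[ln(Π_{j∈S} p(x_j|y) / Σ_{y'} p(y') Π_{j∈S} p(x_j|y'))]. -/
open Finset

/-- Marginal pmf of `(x_j, y)` of a joint pmf `p` on `(Fin D → V) × Y`. -/
noncomputable def margI {Y V : Type*} [Fintype Y] [Fintype V] [DecidableEq V] {D : ℕ}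
    (p : (Fin D → V) → Y → ℝ) (j : Fin D) (v : V) (y : Y) : ℝ :=
  ∑ x : Fin D → V, if x j = v then p x y else 0

/-- Naive Bayes variational lower bound for a feature subset `S`:
`I_LB(x_S:y) = E_{p(x_S,y)}[ln(∏_{j∈S} p(x_j|y) / ∑_{y'} p(y') ∏_{j∈S} p(x_j|y'))]`. -/
noncomputable def ILB {Y V : Type*} [Fintype Y] [Fintype V] [DecidableEq V] {D : ℕ}
    (p : (Fin D → V) → Y → ℝ) (S : Finset (Fin D)) : ℝ :=
  ∑ x : Fin D → V, ∑ y, p x y *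
    Real.log ((∏ j ∈ S, margI p j (x j) y / (∑ x', p x' y)) /
      (∑ y', (∑ x', p x' y') * ∏ j ∈ S, margI p j (x j) y' / (∑ x'', p x'' y')))

/-! The factor `p(x_i | y)` of an irrelevant feature does not depend on `y`, so it pulls out
of both the Naive Bayes likelihood and the mixture `∑_{y'} p(y') q(x_S | y')` in the
denominator, and cancels in their ratio. This happens at every `(x, y)` with `p(x, y) > 0`;
all other points carry weight zero in the expectation. -/

section NaiveBayes

variable {Y V : Type*} [Fintype Y] [Fintype V] [DecidableEq V] {D : ℕ}
  {p : (Fin D → V) → Y → ℝ}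

theorem le_margI (hp0 : ∀ x y, 0 ≤ p x y) (x : Fin D → V) (j : Fin D) (y : Y) :
    p x y ≤ margI p j (x j) y := by
  have hterm : ∀ x' ∈ (univ : Finset (Fin D → V)), 0 ≤ if x' j = x j then p x' y else 0 :=
    fun x' _ => by split_ifs <;> simp [hp0]
  simpa [margI] using single_le_sum hterm (mem_univ x)

theorem prod_insert_div_of_irrelevant {i : Fin D} {S : Finset (Fin D)} (hi : i ∉ S)
    {v : Fin D → V} {m : ℝ} (hirr : ∀ y, 0 < ∑ x, p x y → margI p i (v i) y / ∑ x, p x y = m)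
    {y : Y} (hy : 0 < ∑ x, p x y) :
    ∏ j ∈ insert i S, margI p j (v j) y / ∑ x, p x y
      = m * ∏ j ∈ S, margI p j (v j) y / ∑ x, p x y := by
  rw [prod_insert hi, hirr y hy]

theorem sum_mul_prod_insert_div_of_irrelevant (hp0 : ∀ x y, 0 ≤ p x y) {i : Fin D}
    {S : Finset (Fin D)} (hi : i ∉ S) {v : Fin D → V} {m : ℝ}
    (hirr : ∀ y, 0 < ∑ x, p x y → margI p i (v i) y / ∑ x, p x y = m) :
    ∑ y, (∑ x, p x y) * ∏ j ∈ insert i S, margI p j (v j) y / ∑ x, p x y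
      = m * ∑ y, (∑ x, p x y) * ∏ j ∈ S, margI p j (v j) y / ∑ x, p x y := by
  rw [mul_sum]
  refine sum_congr rfl fun y _ => ?_
  rcases (sum_nonneg fun x _ => hp0 x y).eq_or_lt with hy | hy
  · rw [← hy]; ring
  · rw [prod_insert_div_of_irrelevant hi hirr hy]; ring

end NaiveBayes

theorem stmt7_general {Y V : Type*} [Fintype Y] [Fintype V] [DecidableEq V] {D : ℕ}
    (p : (Fin D → V) → Y → ℝ)
    (hp0 : ∀ x y, 0 ≤ p x y)
    (S : Finset (Fin D)) (i : Fin D) (hi : i ∉ S)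
    (hirr : ∀ (v : V) (y : Y), 0 < (∑ x, p x y) →
      margI p i v y / (∑ x, p x y) = ∑ y', margI p i v y') :
    ILB p (insert i S) = ILB p S := by
  refine sum_congr rfl fun x _ => sum_congr rfl fun y _ => ?_
  rcases (hp0 x y).eq_or_lt with hxy | hxy
  · rw [← hxy, zero_mul, zero_mul]
  have hy : 0 < ∑ x', p x' y := hxy.trans_le (single_le_sum (fun x' _ => hp0 x' y) (mem_univ x))
  have hm : 0 < ∑ y', margI p i (x i) y' := by
    rw [← hirr (x i) y hy]
    exact div_pos (hxy.trans_le (le_margI hp0 x i y)) hy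
  rw [prod_insert_div_of_irrelevant hi (hirr (x i)) hy,
    sum_mul_prod_insert_div_of_irrelevant hp0 hi (hirr (x i)), mul_div_mul_left _ _ hm.ne']

/-- Adding an irrelevant feature `i` (one with `p(x_i|y) = p(x_i)` for every `y`
with `p(y) > 0`) leaves the Naive Bayes variational lower bound unchanged:
`I_LB(x_{S∪{i}}:y) = I_LB(x_S:y)`. -/
theorem stmt7 {Y V : Type*} [Fintype Y] [Fintype V] [DecidableEq V] {D : ℕ}
    (p : (Fin D → V) → Y → ℝ)
    (hp0 : ∀ x y, 0 ≤ p x y) (hp1 : ∑ x, ∑ y, p x y = 1)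
    (S : Finset (Fin D)) (i : Fin D) (hi : i ∉ S)
    (hirr : ∀ (v : V) (y : Y), 0 < (∑ x, p x y) →
      margI p i v y / (∑ x, p x y) = ∑ y', margI p i v y') :
    ILB p (insert i S) = ILB p S :=
  stmt7_general p hp0 S i hi hirr
end

section
/- For the ratio form of the variational bound with q(x_S|y) arbitrary positive (not necessarily normalized) and q(x_S) := Σ_{y'} q(x_S|y')p(y'), the quantity I_LB(x_S:y) := E_{p(x_S,y)}[ln(q(x_S|y)/q(x_S))] satisfies I_LB(x_S:y) ≤ I(x_S:y). -/
open Finset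

/-- Ratio form of the variational bound: for an arbitrary strictly positive (not
necessarily normalized) `q(x_S|y)` and `q(x_S) = ∑_{y'} q(x_S|y') p(y')`, the
quantity `I_LB(x_S:y) = E_{p(x_S,y)}[ln(q(x_S|y)/q(x_S))]` satisfies
`I_LB(x_S:y) ≤ I(x_S:y)`. -/
theorem stmt19 {X Y : Type*} [Fintype X] [Fintype Y]
    (p q : X → Y → ℝ)
    (hp0 : ∀ x y, 0 ≤ p x y) (hp1 : ∑ x, ∑ y, p x y = 1)
    (hq : ∀ x y, 0 < q x y) :
    (∑ x, ∑ y, p x y *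
        Real.log (q x y / (∑ y', q x y' * (∑ x', p x' y'))))
      ≤ MI p := by
  classical
  have hpXnn : ∀ x, (0:ℝ) ≤ ∑ y, p x y := fun x => Finset.sum_nonneg fun y _ => hp0 x y
  have hpYnn : ∀ y, (0:ℝ) ≤ ∑ x, p x y := fun y => Finset.sum_nonneg fun x _ => hp0 x y
  have hsumY : ∑ y, ∑ x, p x y = 1 := by rw [Finset.sum_comm]; exact hp1
  have hexY : ∃ y, (0:ℝ) < ∑ x, p x y := by
    by_contra h
    push_neg at h
    have h0 : ∑ y, ∑ x, p x y = 0 :=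
      Finset.sum_eq_zero fun y _ => le_antisymm (h y) (hpYnn y)
    rw [hsumY] at h0; norm_num at h0
  have hQ : ∀ x, (0:ℝ) < ∑ y', q x y' * (∑ x', p x' y') := by
    intro x
    obtain ⟨y0, hy0⟩ := hexY
    exact Finset.sum_pos' (fun y _ => mul_nonneg (hq x y).le (hpYnn y))
      ⟨y0, Finset.mem_univ y0, mul_pos (hq x y0) hy0⟩
  have key : ∀ x y, p x y * Real.log (q x y / (∑ y', q x y' * (∑ x', p x' y')))
      ≤ p x y * Real.log (p x y / ((∑ y', p x y') * (∑ x', p x' y)))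
        + (q x y * ((∑ y', p x y') * (∑ x', p x' y)) /
            (∑ y', q x y' * (∑ x', p x' y')) - p x y) := by
    intro x y
    rcases eq_or_lt_of_le (hp0 x y) with h0 | hpos
    · have hr : (0:ℝ) ≤ q x y * ((∑ y', p x y') * (∑ x', p x' y)) /
          (∑ y', q x y' * (∑ x', p x' y')) :=
        div_nonneg (mul_nonneg (hq x y).le (mul_nonneg (hpXnn x) (hpYnn y))) (hQ x).le
      simpa [← h0] using hr
    · have hpX : (0:ℝ) < ∑ y', p x y' :=
        lt_of_lt_of_le hpos (Finset.single_le_sum (fun y' _ => hp0 x y') (Finset.mem_univ y))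
      have hpY : (0:ℝ) < ∑ x', p x' y :=
        lt_of_lt_of_le hpos (Finset.single_le_sum (fun x' _ => hp0 x' y) (Finset.mem_univ x))
      have hQx := hQ x
      set A := ∑ y', p x y' with hA
      set B := ∑ x', p x' y with hB
      set Qx := ∑ y', q x y' * (∑ x', p x' y') with hQdef
      have hr : (0:ℝ) < q x y * (A * B) / Qx :=
        div_pos (mul_pos (hq x y) (mul_pos hpX hpY)) hQx
      have hlog := Real.log_le_sub_one_of_pos (show (0:ℝ) < (q x y * (A * B) / Qx) / p x y
        from div_pos hr hpos)
      have heq : Real.log (q x y / Qx)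
          = Real.log (p x y / (A * B)) + Real.log ((q x y * (A * B) / Qx) / p x y) := by
        rw [← Real.log_mul (by positivity) (by positivity)]
        congr 1
        field_simp
      rw [heq, mul_add]
      have h2 : p x y * Real.log ((q x y * (A * B) / Qx) / p x y)
          ≤ q x y * (A * B) / Qx - p x y := by
        calc p x y * Real.log ((q x y * (A * B) / Qx) / p x y)
            ≤ p x y * ((q x y * (A * B) / Qx) / p x y - 1) :=
              mul_le_mul_of_nonneg_left hlog hpos.le
          _ = q x y * (A * B) / Qx - p x y := by field_simp
      linarith
  have hsum_r : ∑ x, ∑ y, q x y * ((∑ y', p x y') * (∑ x', p x' y)) /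
      (∑ y', q x y' * (∑ x', p x' y')) = 1 := by
    have hinner : ∀ x, ∑ y, q x y * ((∑ y', p x y') * (∑ x', p x' y)) /
        (∑ y', q x y' * (∑ x', p x' y')) = ∑ y', p x y' := by
      intro x
      have h1 : ∑ y, q x y * ((∑ y', p x y') * (∑ x', p x' y)) /
          (∑ y', q x y' * (∑ x', p x' y'))
          = (∑ y, q x y * (∑ x', p x' y)) *
            ((∑ y', p x y') / (∑ y', q x y' * (∑ x', p x' y'))) := by
        rw [Finset.sum_mul]
        exact Finset.sum_congr rfl fun y _ => by ring
      rw [h1]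
      have h2 : (∑ y, q x y * (∑ x', p x' y)) = ∑ y', q x y' * (∑ x', p x' y') := rfl
      rw [h2, mul_comm, div_mul_cancel₀ _ (hQ x).ne']
    calc ∑ x, ∑ y, q x y * ((∑ y', p x y') * (∑ x', p x' y)) /
        (∑ y', q x y' * (∑ x', p x' y'))
        = ∑ x, ∑ y', p x y' := Finset.sum_congr rfl fun x _ => hinner x
      _ = 1 := hp1
  calc (∑ x, ∑ y, p x y * Real.log (q x y / (∑ y', q x y' * (∑ x', p x' y'))))
      ≤ ∑ x, ∑ y, (p x y * Real.log (p x y / ((∑ y', p x y') * (∑ x', p x' y)))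
          + (q x y * ((∑ y', p x y') * (∑ x', p x' y)) /
              (∑ y', q x y' * (∑ x', p x' y')) - p x y)) :=
        Finset.sum_le_sum fun x _ => Finset.sum_le_sum fun y _ => key x y
    _ = MI p + ((∑ x, ∑ y, q x y * ((∑ y', p x y') * (∑ x', p x' y)) /
          (∑ y', q x y' * (∑ x', p x' y'))) - ∑ x, ∑ y, p x y) := by
        rw [MI]
        simp [Finset.sum_add_distrib, Finset.sum_sub_distrib]
    _ = MI p := by rw [hsum_r, hp1]; ring
end
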